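/- If q and x are positive integers satisfying q⁴ − q² = 2x² − 2x, then q = 1 or q = 2. Equivalently, with S_1 = {n ∈ ℕ⁺ : ∃ x ∈ ℕ⁺, n(n−1) = 2x(x−1)} and S_2 the set of perfect squares, one has S_1 ∩ S_2 = {1, 4}. -/

import Mathlib

/-!
Put `u = 2q² - 1` and `z = 2x - 1`; the equation becomes `u² + 1 = 2z²`, so
`u + z√2 = (1 + √2)ⁿ = Hₙ + Pₙ√2` with `n = 2m + 1` odd. From
`H_{2m+1} = H_m H_{m+1} + 2P_m P_{m+1}` and `H_{m+1} H_m - 2P_{m+1} P_m = (-1)^m` one gets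
`q² = H_m H_{m+1}` for even `m` and `q² = 2P_m P_{m+1} = 4P_m P_r H_r` with `m + 1 = 2r` for odd
`m`. The factors are pairwise coprime, so either `H_m` is a square, which by `H_m² = 2P_m² + 1`
forces `m = 0`; or `H_r = b²` and `P_r = c²`, and then `b⁴ - 2c⁴ = ±1`. The sign `+1` forces
`c = 0`, and `b⁴ + 1 = 2c⁴` forces `b = 1` by Fermat's theorem that `x⁴ - y⁴ = z²` has no
solution with `yz ≠ 0`; hence `m = 1`.
-/

lemma exists_eq_sq_of_coprime {a b c : ℕ} (hab : a.Coprime b) (h : a * b = c ^ 2) :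
    ∃ d, a = d ^ 2 :=
  exists_eq_pow_of_mul_eq_pow (Nat.isUnit_iff.mpr hab) h

lemma exists_pos_sq_of_isCoprime {a b c : ℤ} (hab : IsCoprime a b) (ha : 0 < a)
    (h : a * b = c ^ 2) : ∃ d, 0 < d ∧ a = d ^ 2 := by
  obtain ⟨d, hd | hd⟩ := Int.sq_of_isCoprime hab h
  · refine ⟨|d|, abs_pos.mpr ?_, by rw [sq_abs, hd]⟩
    rintro rfl
    simp [hd] at ha
  · nlinarith [sq_nonneg d]

-- The even-leg case of the descent below: there `x² = m² + n²` and `y² = 2mn`.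
lemma exists_lt_pow_four_eq_pow_four_add_sq {x m n : ℤ} (hx : 0 < x) (hm : 0 < m) (hn : 0 < n)
    (hmn : IsCoprime m n) (hm2 : Even m) (hsq : IsSquare (2 * m * n))
    (h : x ^ 2 = m ^ 2 + n ^ 2) :
    ∃ e f w, 0 < e ∧ e < x ∧ IsCoprime e f ∧ f ≠ 0 ∧ w ≠ 0 ∧ e ^ 4 = f ^ 4 + w ^ 2 := by
  obtain ⟨k, rfl⟩ := hm2.two_dvd
  obtain ⟨y, hy⟩ := hsq
  obtain ⟨y', rfl⟩ : 2 ∣ y := by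
    have : Even (y * y) := ⟨2 * k * n, by rw [← hy]; ring⟩
    exact (Int.even_mul.mp this).elim Even.two_dvd Even.two_dvd
  have hk : 0 < k := by omega
  have hkn : IsCoprime k n := hmn.of_mul_left_right
  obtain ⟨s, -, rfl⟩ := exists_pos_sq_of_isCoprime hkn hk (c := y') (by linarith)
  obtain ⟨t, -, rfl⟩ := exists_pos_sq_of_isCoprime hkn.symm hn (c := y') (by linarith)
  have ht : t ^ 2 % 2 = 1 := by
    rw [← Int.odd_iff, ← Int.not_even_iff_odd]
    intro h2
    have := hmn.isUnit_of_dvd' (dvd_mul_right 2 _) h2.two_dvd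
    norm_num [Int.isUnit_iff] at this
  obtain ⟨p, r, htpr, hspr, hxpr, hpr, -, hp0⟩ := PythagoreanTriple.coprime_classification'
    (x := t ^ 2) (y := 2 * s ^ 2) (z := x) (by unfold PythagoreanTriple; linear_combination -h)
    (Int.isCoprime_iff_gcd_eq_one.mp (by simpa [two_mul] using hmn.symm)) ht hx
  have hpr' : IsCoprime p r := Int.isCoprime_iff_gcd_eq_one.mpr hpr
  have hp : 0 < p := hp0.lt_of_ne (by rintro rfl; linarith)
  have hr : 0 < r := pos_of_mul_pos_right (by linarith : 0 < p * r) hp.le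
  obtain ⟨e, he, rfl⟩ := exists_pos_sq_of_isCoprime hpr' hp (c := s) (by linarith)
  obtain ⟨f, hf, rfl⟩ := exists_pos_sq_of_isCoprime hpr'.symm hr (c := s) (by linarith)
  refine ⟨e, f, t, he, ?_, (IsCoprime.pow_iff two_pos two_pos).mp hpr', hf.ne', ?_, ?_⟩
  · nlinarith [pow_pos hf 4]
  · rintro rfl
    simp at hn
  · linear_combination -htpr

-- `(y², z, x²)` is a primitive Pythagorean triple, and either parity of `y` yields a solution
-- with smaller `x`.
theorem pow_four_ne_pow_four_add_sq_of_isCoprime {x y z : ℤ} (hx : 0 < x) (hxy : IsCoprime x y)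
    (hy : y ≠ 0) (hz : z ≠ 0) : x ^ 4 ≠ y ^ 4 + z ^ 2 := by
  intro h
  have hyz : IsCoprime (y ^ 2) z := by
    have := (hxy.pow (m := 4) (n := 4)).symm.add_mul_left_right (-1)
    rw [show x ^ 4 + y ^ 4 * -1 = z ^ 2 by linear_combination h,
      show y ^ 4 = (y ^ 2) ^ 2 by ring] at this
    exact (IsCoprime.pow_iff two_pos two_pos).mp this
  have hx2 : 0 < x ^ 2 := by positivity
  rcases Int.even_or_odd y with hye | hyo
  · have hzo : z % 2 = 1 := by
      rw [← Int.odd_iff, ← Int.not_even_iff_odd]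
      intro hze
      have := hyz.isUnit_of_dvd' (hye.two_dvd.pow two_ne_zero) hze.two_dvd
      norm_num [Int.isUnit_iff] at this
    obtain ⟨m, n, -, hy2, hxmn, hmn, hpar, hm0⟩ := PythagoreanTriple.coprime_classification'
      (x := z) (y := y ^ 2) (z := x ^ 2) (by unfold PythagoreanTriple; linear_combination -h)
      (Int.isCoprime_iff_gcd_eq_one.mp hyz.symm) hzo hx2
    have hmn' : IsCoprime m n := Int.isCoprime_iff_gcd_eq_one.mpr hmn
    have hy2pos : 0 < y ^ 2 := by positivity
    have hm : 0 < m := hm0.lt_of_ne (by rintro rfl; linarith)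
    have hn : 0 < n := pos_of_mul_pos_right (by linarith : 0 < m * n) hm.le
    have hsq : IsSquare (2 * m * n) := ⟨y, by rw [← hy2, sq]⟩
    obtain ⟨e, f, w, he, hex, hef, hf, hw, heq⟩ :
        ∃ e f w, 0 < e ∧ e < x ∧ IsCoprime e f ∧ f ≠ 0 ∧ w ≠ 0 ∧ e ^ 4 = f ^ 4 + w ^ 2 := by
      rcases hpar with ⟨hm2, -⟩ | ⟨-, hn2⟩
      · exact exists_lt_pow_four_eq_pow_four_add_sq hx hm hn hmn' (Int.even_iff.mpr hm2) hsq
          (by linear_combination hxmn)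
      · exact exists_lt_pow_four_eq_pow_four_add_sq hx hn hm hmn'.symm (Int.even_iff.mpr hn2)
          (by rwa [mul_right_comm]) (by linear_combination hxmn)
    exact pow_four_ne_pow_four_add_sq_of_isCoprime he hef hf hw heq
  · obtain ⟨m, n, hymn, hz2, hxmn, hmn, -, hm0⟩ := PythagoreanTriple.coprime_classification'
      (x := y ^ 2) (y := z) (z := x ^ 2) (by unfold PythagoreanTriple; linear_combination -h)
      (Int.isCoprime_iff_gcd_eq_one.mp hyz) (Int.odd_iff.mp hyo.pow) hx2
    have hm : m ≠ 0 := by rintro rfl; simp_all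
    have hn : n ≠ 0 := by rintro rfl; simp_all
    have hmx : m < x := lt_of_pow_lt_pow_left₀ 2 hx.le <| by
      rw [hxmn]
      exact lt_add_of_pos_right _ (by positivity)
    exact pow_four_ne_pow_four_add_sq_of_isCoprime (hm0.lt_of_ne' hm)
      (Int.isCoprime_iff_gcd_eq_one.mpr hmn) hn (mul_ne_zero hx.ne' hy)
      (by linear_combination (-y ^ 2) * hxmn - (m ^ 2 + n ^ 2) * hymn)
termination_by x.natAbs

theorem pow_four_ne_pow_four_add_sq {x y z : ℤ} (hy : y ≠ 0) (hz : z ≠ 0) :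
    x ^ 4 ≠ y ^ 4 + z ^ 2 := by
  wlog hx : 0 ≤ x generalizing x
  · rw [← Even.pow_abs (by decide)]
    exact this (abs_nonneg x)
  intro h
  obtain ⟨g, x', y', hg, hgcd, rfl, rfl⟩ :=
    Int.exists_gcd_one' (Int.gcd_pos_of_ne_zero_right x hy)
  obtain ⟨z', rfl⟩ : (g : ℤ) ^ 2 ∣ z := by
    rw [← UniqueFactorizationMonoid.pow_dvd_pow_iff_dvd two_ne_zero]
    exact ⟨x' ^ 4 - y' ^ 4, by linear_combination -h⟩
  have hg4 : (g : ℤ) ^ 4 ≠ 0 := by positivity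
  have h' : x' ^ 4 = y' ^ 4 + z' ^ 2 := mul_right_cancel₀ hg4 (by linear_combination h)
  have hy' : y' ≠ 0 := left_ne_zero_of_mul hy
  have hx' : 0 < x' := by
    refine (nonneg_of_mul_nonneg_left hx (by positivity)).lt_of_ne' ?_
    rintro rfl
    have : 0 < y' ^ 4 := by positivity
    nlinarith [sq_nonneg z']
  exact pow_four_ne_pow_four_add_sq_of_isCoprime hx' (Int.isCoprime_iff_gcd_eq_one.mpr hgcd) hy'
    (right_ne_zero_of_mul hz) h'

lemma eq_zero_of_pow_four_eq_two_mul_sq_add_one {a y : ℕ} (h : a ^ 4 = 2 * y ^ 2 + 1) :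
    y = 0 := by
  obtain ⟨w, rfl⟩ : Odd a := (Nat.odd_pow_iff (by norm_num)).mp ⟨y ^ 2, h⟩
  obtain ⟨v, rfl⟩ : Even y :=
    (Nat.even_pow' two_ne_zero).mp
      ⟨4 * w ^ 4 + 8 * w ^ 3 + 6 * w ^ 2 + 2 * w, by ring_nf at h ⊢; linarith⟩
  have hv : (w ^ 2 + w) * ((w ^ 2 + w) * 2 + 1) = v ^ 2 := by ring_nf at h ⊢; linarith
  obtain ⟨s, hs⟩ := exists_eq_sq_of_coprime
    ((Nat.coprime_mul_left_add_right _ _ _).mpr (Nat.coprime_one_right _)) hv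
  obtain rfl : w = 0 := by
    by_contra hw
    exact Nat.not_exists_sq' (m := w) (by nlinarith [Nat.pos_of_ne_zero hw]) (by nlinarith)
      ⟨s, hs.symm⟩
  simpa using hv.symm

lemma eq_one_of_pow_four_add_one_eq_two_mul_pow_four {b c : ℕ} (h : b ^ 4 + 1 = 2 * c ^ 4) :
    b = 1 := by
  by_contra hb
  have hb0 : b ≠ 0 := by rintro rfl; omega
  have hb4 : (b : ℤ) ^ 4 - 1 ≠ 0 := by
    rw [sub_ne_zero]
    exact_mod_cast (pow_eq_one_iff_of_nonneg (Nat.zero_le b) (by norm_num)).not.mpr hb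
  have hZ : (b : ℤ) ^ 4 + 1 = 2 * c ^ 4 := by exact_mod_cast h
  refine pow_four_ne_pow_four_add_sq (x := 2 * c ^ 2) (y := 2 * b) (z := 2 * (b ^ 4 - 1))
    (by positivity) (by positivity) ?_
  linear_combination (-4 * (2 * c ^ 4 + b ^ 4 + 1)) * hZ

-- `pellH n + pellP n * √2 = (1 + √2) ^ n`
mutual
def pellH : ℕ → ℕ
  | 0 => 1
  | n + 1 => pellH n + 2 * pellP n
def pellP : ℕ → ℕ
  | 0 => 0
  | n + 1 => pellH n + pellP n
end

@[simp] lemma pellH_zero : pellH 0 = 1 := rfl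
@[simp] lemma pellP_zero : pellP 0 = 0 := rfl
lemma pellH_succ (n : ℕ) : pellH (n + 1) = pellH n + 2 * pellP n := rfl
lemma pellP_succ (n : ℕ) : pellP (n + 1) = pellH n + pellP n := rfl

lemma pellH_pos (n : ℕ) : 0 < pellH n := by
  induction n with
  | zero => simp
  | succ n ih => rw [pellH_succ]; omega

lemma pellP_eq_zero_iff {n : ℕ} : pellP n = 0 ↔ n = 0 := by
  cases n with
  | zero => simp
  | succ n => simp [pellP_succ, (pellH_pos n).ne']

lemma pellH_eq_one_iff {n : ℕ} : pellH n = 1 ↔ n ≤ 1 := by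
  match n with
  | 0 | 1 => simp [pellH_succ]
  | n + 2 =>
    have := pellH_pos n
    simp only [pellH_succ, pellP_succ]
    omega

lemma pellH_sq_sub_two_mul_pellP_sq (n : ℕ) :
    (pellH n : ℤ) ^ 2 - 2 * pellP n ^ 2 = (-1) ^ n := by
  induction n with
  | zero => simp
  | succ n ih =>
    rw [pellH_succ, pellP_succ, pow_succ]
    push_cast
    linear_combination -ih

lemma pellH_succ_mul_pellH_sub (n : ℕ) :
    (pellH (n + 1) * pellH n : ℤ) - 2 * (pellP (n + 1) * pellP n) = (-1) ^ n := by
  rw [pellH_succ, pellP_succ]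
  push_cast
  linear_combination pellH_sq_sub_two_mul_pellP_sq n

lemma pellP_add_pellH_add (m n : ℕ) :
    pellP (m + n) = pellP m * pellH n + pellH m * pellP n ∧
      pellH (m + n) = pellH m * pellH n + 2 * pellP m * pellP n := by
  induction n with
  | zero => simp
  | succ n ih =>
    simp only [← add_assoc, pellP_succ, pellH_succ, ih.1, ih.2]
    constructor <;> ring

lemma pellP_two_mul (n : ℕ) : pellP (2 * n) = 2 * pellP n * pellH n := by
  rw [two_mul, (pellP_add_pellH_add n n).1]; ring

lemma pellH_two_mul_add_one (n : ℕ) :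
    pellH (2 * n + 1) = pellH n * pellH (n + 1) + 2 * pellP n * pellP (n + 1) := by
  rw [two_mul, add_assoc, (pellP_add_pellH_add n (n + 1)).2]

lemma isCoprime_pellH_two_mul_pellP (n : ℕ) : IsCoprime (pellH n : ℤ) (2 * pellP n) := by
  have hsq : ((-1 : ℤ) ^ n) ^ 2 = 1 := by rw [← pow_mul, pow_mul']; simp
  exact ⟨(-1) ^ n * pellH n, -(-1) ^ n * pellP n, by
    linear_combination (-1) ^ n * pellH_sq_sub_two_mul_pellP_sq n + hsq⟩

lemma coprime_pellH_pellP (n : ℕ) : (pellH n).Coprime (pellP n) :=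
  Nat.isCoprime_iff_coprime.mp (isCoprime_pellH_two_mul_pellP n).of_mul_right_right

lemma coprime_pellH_pellH_succ (n : ℕ) : (pellH n).Coprime (pellH (n + 1)) := by
  rw [← Nat.isCoprime_iff_coprime, pellH_succ, Nat.cast_add, add_comm]
  simpa using (isCoprime_pellH_two_mul_pellP n).add_mul_left_right 1

lemma coprime_pellP_pellP_succ (n : ℕ) : (pellP n).Coprime (pellP (n + 1)) := by
  rw [← Nat.isCoprime_iff_coprime, pellP_succ, Nat.cast_add]
  simpa using (coprime_pellH_pellP n).isCoprime.symm.add_mul_left_right 1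

lemma exists_eq_pellH_pellP {u z : ℕ} (h : |(u : ℤ) ^ 2 - 2 * z ^ 2| = 1) :
    ∃ n, u = pellH n ∧ z = pellP n := by
  induction z using Nat.strong_induction_on generalizing u with
  | _ z ih =>
  rcases Nat.eq_zero_or_pos z with rfl | hz
  · refine ⟨0, ?_, rfl⟩
    have : u ^ 2 = 1 := by exact_mod_cast (by simpa using h : (u : ℤ) ^ 2 = 1)
    simpa using this
  · obtain ⟨hlow, hup⟩ := abs_le.mp h.le
    have hzu : z ≤ u := by
      suffices (z : ℤ) ≤ u by exact_mod_cast this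
      nlinarith
    have huz : u < 2 * z := by
      suffices (u : ℤ) < 2 * z by exact_mod_cast this
      nlinarith
    -- `(u, z) ↦ (2z - u, u - z)` inverts the recursion step and negates `u² - 2z²`
    obtain ⟨n, hu, hz⟩ := ih (u - z) (by omega) (u := 2 * z - u) (by
      push_cast [hzu, huz.le]
      rw [← h, ← abs_neg]
      ring_nf)
    exact ⟨n + 1, by rw [pellH_succ]; omega, by rw [pellP_succ]; omega⟩

lemma eq_zero_of_even_of_pellH_eq_sq {m a : ℕ} (hm : Even m) (h : pellH m = a ^ 2) : m = 0 := by
  have hpell := pellH_sq_sub_two_mul_pellP_sq m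
  rw [hm.neg_one_pow, h] at hpell
  push_cast at hpell
  have : a ^ 4 = 2 * pellP m ^ 2 + 1 := by
    exact_mod_cast (by linear_combination hpell : (a : ℤ) ^ 4 = 2 * pellP m ^ 2 + 1)
  exact pellP_eq_zero_iff.mp (eq_zero_of_pow_four_eq_two_mul_sq_add_one this)

lemma le_one_of_pellH_eq_sq_of_pellP_eq_sq {r b c : ℕ} (hb : pellH r = b ^ 2)
    (hc : pellP r = c ^ 2) : r ≤ 1 := by
  rcases Nat.even_or_odd r with hr | hr
  · exact (eq_zero_of_even_of_pellH_eq_sq hr hb).trans_le zero_le_one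
  · have hpell := pellH_sq_sub_two_mul_pellP_sq r
    rw [hr.neg_one_pow, hb, hc] at hpell
    push_cast at hpell
    have : b ^ 4 + 1 = 2 * c ^ 4 := by
      exact_mod_cast (by linear_combination hpell : (b : ℤ) ^ 4 + 1 = 2 * c ^ 4)
    rw [← pellH_eq_one_iff, hb, eq_one_of_pow_four_add_one_eq_two_mul_pow_four this, one_pow]

lemma eq_zero_of_pellH_mul_pellH_succ_eq_sq {m q : ℕ} (hm : Even m)
    (h : pellH m * pellH (m + 1) = q ^ 2) : m = 0 :=
  have ⟨_, ha⟩ := exists_eq_sq_of_coprime (coprime_pellH_pellH_succ m) h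
  eq_zero_of_even_of_pellH_eq_sq hm ha

lemma eq_one_of_two_mul_pellP_mul_pellP_succ_eq_sq {m q : ℕ} (hm : Odd m)
    (h : 2 * (pellP m * pellP (m + 1)) = q ^ 2) : m = 1 := by
  obtain ⟨r, hr⟩ : ∃ r, m + 1 = 2 * r := by obtain ⟨k, rfl⟩ := hm; exact ⟨k + 1, by ring⟩
  rw [hr, pellP_two_mul] at h
  obtain ⟨q', rfl⟩ : 2 ∣ q := Nat.prime_two.dvd_of_dvd_pow ⟨_, h.symm⟩
  have hcop : (pellP m).Coprime (pellP r * pellH r) :=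
    (coprime_pellP_pellP_succ m).coprime_dvd_right ⟨2, by rw [hr, pellP_two_mul]; ring⟩
  obtain ⟨β, hβ⟩ := exists_eq_sq_of_coprime hcop.symm (c := q') (by linarith)
  obtain ⟨c, hc⟩ := exists_eq_sq_of_coprime (coprime_pellH_pellP r).symm hβ
  obtain ⟨b, hb⟩ := exists_eq_sq_of_coprime (coprime_pellH_pellP r) (by rw [mul_comm]; exact hβ)
  have := le_one_of_pellH_eq_sq_of_pellP_eq_sq hb hc
  omega

theorem eq_one_or_two_of_pellH_add_one_eq {n q : ℕ} (hn : Odd n) (h : pellH n + 1 = 2 * q ^ 2) :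
    q = 1 ∨ q = 2 := by
  obtain ⟨m, rfl⟩ := hn
  rw [pellH_two_mul_add_one] at h
  have hcross := pellH_succ_mul_pellH_sub m
  rcases Nat.even_or_odd m with hm | hm
  · rw [hm.neg_one_pow] at hcross
    obtain rfl := eq_zero_of_pellH_mul_pellH_succ_eq_sq hm (by zify at h ⊢; linarith)
    exact .inl (by simpa [pellH_succ] using h)
  · rw [hm.neg_one_pow] at hcross
    obtain rfl := eq_one_of_two_mul_pellP_mul_pellP_succ_eq_sq hm (by zify at h ⊢; linarith)
    have : q ^ 2 = 2 ^ 2 := by simp [pellH_succ, pellP_succ] at h; omega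
    exact .inr (Nat.pow_left_injective two_ne_zero this)

theorem eq_one_or_two_of_pow_four_sub_sq_eq {q : ℕ} {x : ℤ} (hq : 0 < q)
    (h : (q : ℤ) ^ 4 - q ^ 2 = 2 * x ^ 2 - 2 * x) : q = 1 ∨ q = 2 := by
  have hq2 : 1 ≤ 2 * q ^ 2 := by have := Nat.one_le_pow 2 q hq; omega
  have hpell : ((2 * q ^ 2 - 1 : ℕ) : ℤ) ^ 2 - 2 * ((2 * x - 1).natAbs : ℤ) ^ 2 = -1 := by
    push_cast [hq2, Int.natCast_natAbs, sq_abs]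
    linear_combination 4 * h
  obtain ⟨n, hu, hz⟩ := exists_eq_pellH_pellP (by rw [hpell]; rfl)
  have hn : Odd n := by
    rw [← neg_one_pow_eq_neg_one_iff_odd (R := ℤ) (by decide), ← pellH_sq_sub_two_mul_pellP_sq,
      ← hu, ← hz, hpell]
  exact eq_one_or_two_of_pellH_add_one_eq hn (by omega)

/-- If `q, x` are positive integers with `q⁴ - q² = 2x² - 2x`, then `q = 1` or `q = 2`;
equivalently, `S₁ ∩ S₂ = {1, 4}` where `S₁ = {n : ∃ x > 0, n(n-1) = 2x(x-1)}` and `S₂` is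
the set of perfect squares. -/
theorem S1_inter_S2_eq :
    (∀ q x : ℕ, 0 < q → 0 < x → q ^ 4 - q ^ 2 = 2 * x ^ 2 - 2 * x → q = 1 ∨ q = 2) ∧
    ({n : ℕ | 0 < n ∧ ∃ x : ℕ, 0 < x ∧ n * (n - 1) = 2 * (x * (x - 1))} ∩
      {n : ℕ | ∃ k : ℕ, 0 < k ∧ n = k ^ 2} = {1, 4}) := by
  refine ⟨fun q x hq hx h => eq_one_or_two_of_pow_four_sub_sq_eq (x := x) hq ?_, ?_⟩
  · have h1 : q ^ 2 ≤ q ^ 4 := Nat.pow_le_pow_right hq (by norm_num)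
    have h2 : 2 * x ≤ 2 * x ^ 2 := by nlinarith
    zify [h1, h2] at h
    exact h
  · ext n
    simp only [Set.mem_inter_iff, Set.mem_ofPred_eq, Set.mem_insert_iff, Set.mem_singleton_iff]
    constructor
    · rintro ⟨⟨-, x, hx, hxx⟩, k, hk, rfl⟩
      zify [Nat.one_le_pow 2 k hk, Nat.one_le_iff_ne_zero.mpr hx.ne'] at hxx
      rcases eq_one_or_two_of_pow_four_sub_sq_eq (x := x) hk (by linear_combination hxx) with
        rfl | rfl <;> norm_num
    · rintro (rfl | rfl)
      · exact ⟨⟨one_pos, 1, one_pos, rfl⟩, 1, one_pos, rfl⟩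
      · exact ⟨⟨by norm_num, 3, by norm_num, rfl⟩, 2, by norm_num, rfl⟩
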